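/- arXiv:2007.11259 — 3 statements merged into one kernel-verified Lean document; each statement's English description precedes it below -/
import Mathlib

section
/- Consider the binary logistic model on ℝⁿ with weight vector w ∈ ℝⁿ: for y ∈ {−1, 1}, p(y = 1 | x) = σ(wᵀx) and p(y = −1 | x) = 1 − σ(wᵀx), where σ(t) = 1/(1 + e^{−t}). Let x₁, …, x_N ∈ ℝⁿ be a finite dataset and define the averaged Fisher matrix F = (1/N) ∑_{i=1}^{N} ∑_{y ∈ {−1,1}} p(y|x_i) · (∇_x log p(y|x_i))(∇_x log p(y|x_i))ᵀ. Then F = c · w wᵀ and tr(F) = c · ‖w‖₂², where c = (1/N) ∑_{i=1}^{N} p(y = 1 | x_i) · p(y = −1 | x_i). -/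
open scoped BigOperators
open Real InnerProductSpace

/-! Both score functions are multiples of `w`: `∇ₓ log σ(wᵀx) = (1 - σ(wᵀx)) w` and
`∇ₓ log (1 - σ(wᵀx)) = -σ(wᵀx) w`. Hence the summand for `xᵢ` is
`(σ (1 - σ)² + (1 - σ) σ²) w wᵀ = σ (1 - σ) w wᵀ`, and averaging gives `c w wᵀ`. -/

theorem HasDerivAt.hasGradientAt_comp_inner {E : Type*} [NormedAddCommGroup E]
    [InnerProductSpace ℝ E] [CompleteSpace E] {g : ℝ → ℝ} {g' : ℝ} {w x : E}
    (hg : HasDerivAt g g' ⟪w, x⟫_ℝ) :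
    HasGradientAt (fun y => g ⟪w, y⟫_ℝ) (g' • w) x := by
  rw [hasGradientAt_iff_hasFDerivAt]
  refine (hg.comp_hasFDerivAt x (innerSL ℝ w).hasFDerivAt).congr_fderiv ?_
  ext y
  simp

theorem EuclideanSpace.sum_mul_eq_inner {ι : Type*} [Fintype ι] (w x : EuclideanSpace ℝ ι) :
    ∑ k, w k * x k = ⟪w, x⟫_ℝ := by
  simp [PiLp.inner_apply, mul_comm]

theorem EuclideanSpace.gradient_comp_sum_mul {ι : Type*} [Fintype ι] {g : ℝ → ℝ} {g' : ℝ}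
    {w x : EuclideanSpace ℝ ι} (hg : HasDerivAt g g' (∑ k, w k * x k)) :
    gradient (fun y : EuclideanSpace ℝ ι => g (∑ k, w k * y k)) x = g' • w := by
  simp only [EuclideanSpace.sum_mul_eq_inner] at hg ⊢
  exact hg.hasGradientAt_comp_inner.gradient

theorem Real.hasDerivAt_log_sigmoid (x : ℝ) :
    HasDerivAt (fun t => log (sigmoid t)) (1 - sigmoid x) x := by
  convert (hasDerivAt_sigmoid x).log (sigmoid_pos x).ne' using 1
  field_simp [(sigmoid_pos x).ne']

theorem Real.hasDerivAt_log_one_sub_sigmoid (x : ℝ) :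
    HasDerivAt (fun t => log (1 - sigmoid t)) (-sigmoid x) x := by
  have h := (hasDerivAt_log_sigmoid (-x)).comp x (hasDerivAt_neg x)
  simp only [sigmoid_neg, Function.comp_def, sub_sub_cancel, mul_neg_one] at h
  exact h

theorem logistic_averaged_fisher_eq_rank_one_general
    {n : ℕ} (w : EuclideanSpace ℝ (Fin n))
    (N : ℕ) (xs : Fin N → EuclideanSpace ℝ (Fin n))
    (σ : ℝ → ℝ) (hσ : ∀ t, σ t = 1 / (1 + Real.exp (-t)))
    (c : ℝ)
    (hc : c = (1 / (N : ℝ)) * ∑ a : Fin N,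
      σ (∑ k, w k * xs a k) * (1 - σ (∑ k, w k * xs a k)))
    (F : Matrix (Fin n) (Fin n) ℝ)
    (hF : ∀ i j, F i j = (1 / (N : ℝ)) * ∑ a : Fin N,
      (σ (∑ k, w k * xs a k) *
          gradient (fun x' : EuclideanSpace ℝ (Fin n) =>
            Real.log (σ (∑ k, w k * x' k))) (xs a) i *
          gradient (fun x' : EuclideanSpace ℝ (Fin n) =>
            Real.log (σ (∑ k, w k * x' k))) (xs a) j +
        (1 - σ (∑ k, w k * xs a k)) *
          gradient (fun x' : EuclideanSpace ℝ (Fin n) =>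
            Real.log (1 - σ (∑ k, w k * x' k))) (xs a) i *
          gradient (fun x' : EuclideanSpace ℝ (Fin n) =>
            Real.log (1 - σ (∑ k, w k * x' k))) (xs a) j)) :
    (∀ i j, F i j = c * (w i * w j)) ∧ F.trace = c * ∑ i, w i ^ 2 := by
  obtain rfl : σ = sigmoid := funext fun t => by rw [hσ, one_div, sigmoid_def]
  have hFij : ∀ i j, F i j = c * (w i * w j) := by
    intro i j
    simp only [hF, hc, EuclideanSpace.gradient_comp_sum_mul (hasDerivAt_log_sigmoid _),
      EuclideanSpace.gradient_comp_sum_mul (hasDerivAt_log_one_sub_sigmoid _),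
      PiLp.smul_apply, smul_eq_mul, mul_assoc, Finset.sum_mul]
    congr 1
    exact Finset.sum_congr rfl fun a _ => by ring
  refine ⟨hFij, ?_⟩
  simp only [Matrix.trace, Matrix.diag_apply, hFij, Finset.mul_sum, sq]

/-- **Averaged Fisher matrix of the binary logistic model over a dataset.**
For the model `p(y = 1 | x) = σ(wᵀx)`, `p(y = -1 | x) = 1 - σ(wᵀx)` with
`σ(t) = 1/(1 + e^{-t})`, and a dataset `x₁, …, x_N`, the averaged Fisher matrix
`F = (1/N) ∑ᵢ ∑_{y ∈ {-1,1}} p(y|xᵢ) (∇ₓ log p(y|xᵢ))(∇ₓ log p(y|xᵢ))ᵀ`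
equals `c · w wᵀ` with `c = (1/N) ∑ᵢ p(y=1|xᵢ) p(y=-1|xᵢ)`, and
`tr F = c · ‖w‖₂²`. -/
theorem logistic_averaged_fisher_eq_rank_one
    {n : ℕ} (w : EuclideanSpace ℝ (Fin n))
    (N : ℕ) (hN : 0 < N) (xs : Fin N → EuclideanSpace ℝ (Fin n))
    (σ : ℝ → ℝ) (hσ : ∀ t, σ t = 1 / (1 + Real.exp (-t)))
    (c : ℝ)
    (hc : c = (1 / (N : ℝ)) * ∑ a : Fin N,
      σ (∑ k, w k * xs a k) * (1 - σ (∑ k, w k * xs a k)))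
    (F : Matrix (Fin n) (Fin n) ℝ)
    (hF : ∀ i j, F i j = (1 / (N : ℝ)) * ∑ a : Fin N,
      (σ (∑ k, w k * xs a k) *
          gradient (fun x' : EuclideanSpace ℝ (Fin n) =>
            Real.log (σ (∑ k, w k * x' k))) (xs a) i *
          gradient (fun x' : EuclideanSpace ℝ (Fin n) =>
            Real.log (σ (∑ k, w k * x' k))) (xs a) j +
        (1 - σ (∑ k, w k * xs a k)) *
          gradient (fun x' : EuclideanSpace ℝ (Fin n) =>
            Real.log (1 - σ (∑ k, w k * x' k))) (xs a) i *
          gradient (fun x' : EuclideanSpace ℝ (Fin n) =>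
            Real.log (1 - σ (∑ k, w k * x' k))) (xs a) j)) :
    (∀ i j, F i j = c * (w i * w j)) ∧ F.trace = c * ∑ i, w i ^ 2 :=
  logistic_averaged_fisher_eq_rank_one_general w N xs σ hσ c hc F hF
end

section
/- Let Z and Y be finite types, n a natural number, and p : ℝⁿ → Z → ℝ a family of probability mass functions such that for every x and z, p z x > 0 and ∑_{z ∈ Z} p z x = 1, with x ↦ p z x differentiable for every z. Let g : Z → Y be any function and define the induced family q : ℝⁿ → Y → ℝ by q y x = ∑_{z : g(z) = y} p z x; assume q y x > 0 for all y, x. Define the Fisher matrices S_p(x) = ∑_{z ∈ Z} p z x · (∇_x log p z x)(∇_x log p z x)ᵀ and S_q(x) = ∑_{y ∈ Y} q y x · (∇_x log q y x)(∇_x log q y x)ᵀ. Then for every x ∈ ℝⁿ and every v ∈ ℝⁿ, vᵀ S_q(x) v ≤ vᵀ S_p(x) v; in particular tr(S_q(x)) ≤ tr(S_p(x)). -/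
/-!
In a direction `v`, the Fisher quadratic form of `p` is `∑ z, (∂ᵥ p_z)² / p_z`, since the score
`∂ᵥ log p_z` is `∂ᵥ p_z / p_z`. The derivative of `q_y` is the sum of the `∂ᵥ p_z` over the fibre
`g⁻¹ y`, so on each fibre the comparison is Titu's form of Cauchy–Schwarz,
`(∑ aᵢ)² / ∑ wᵢ ≤ ∑ aᵢ² / wᵢ`. The trace inequality is the quadratic one at the basis vectors.
-/

open scoped BigOperators

/-- The Fisher (sensitivity) matrix of a family of probability mass functions
`p : ℝⁿ → Z → ℝ` (written `p x z`) with respect to the input `x`: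
`S(x) i j = ∑ z, p x z · ∂ᵢ log p x z · ∂ⱼ log p x z`. -/
noncomputable def fisherMatrix {Z : Type*} [Fintype Z] {n : ℕ}
    (p : EuclideanSpace ℝ (Fin n) → Z → ℝ) (x : EuclideanSpace ℝ (Fin n)) :
    Matrix (Fin n) (Fin n) ℝ :=
  fun i j => ∑ z, p x z *
    gradient (fun y => Real.log (p y z)) x i *
    gradient (fun y => Real.log (p y z)) x j

open Finset

theorem Matrix.trace_le_trace_of_forall_quadratic_le {ι R : Type*} [Fintype ι] [DecidableEq ι]
    [Semiring R] [PartialOrder R] [IsOrderedAddMonoid R] {A B : Matrix ι ι R}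
    (h : ∀ v : ι → R, ∑ i, ∑ j, v i * A i j * v j ≤ ∑ i, ∑ j, v i * B i j * v j) :
    A.trace ≤ B.trace := by
  have diag (M : Matrix ι ι R) (k : ι) :
      ∑ i, ∑ j, (Pi.single k 1 : ι → R) i * M i j * (Pi.single k 1 : ι → R) j = M k k := by
    simp [Pi.single_apply, ite_mul, mul_ite]
  exact sum_le_sum fun k _ => by simpa only [Matrix.diag, diag] using h (Pi.single k 1)

theorem sum_mul_gradient_eq_fderiv {ι : Type*} [Fintype ι] (f : EuclideanSpace ℝ ι → ℝ)
    (x : EuclideanSpace ℝ ι) (v : ι → ℝ) :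
    ∑ i, v i * gradient f x i = fderiv ℝ f x (WithLp.toLp 2 v) := by
  rw [← inner_gradient_left, PiLp.inner_apply]
  simp

theorem sum_sq_sum_fiberwise_div_le {ι κ : Type*} [Fintype ι] [Fintype κ] [DecidableEq κ]
    (g : ι → κ) (a : ι → ℝ) {w : ι → ℝ} (hw : ∀ i, 0 < w i) :
    ∑ k, (∑ i ∈ univ.filter (fun i => g i = k), a i) ^ 2 /
        ∑ i ∈ univ.filter (fun i => g i = k), w i ≤ ∑ i, a i ^ 2 / w i :=
  calc _ ≤ ∑ k, ∑ i ∈ univ.filter (fun i => g i = k), a i ^ 2 / w i :=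
        sum_le_sum fun _ _ => sq_sum_div_le_sum_sq_div _ _ fun i _ => hw i
    _ = ∑ i, a i ^ 2 / w i := sum_fiberwise _ _ _

theorem sum_mul_fisherMatrix_mul_eq_sum_fderiv_sq_div {Z : Type*} [Fintype Z] {n : ℕ}
    (p : EuclideanSpace ℝ (Fin n) → Z → ℝ) (x : EuclideanSpace ℝ (Fin n))
    (hp : ∀ z, p x z ≠ 0) (hdiff : ∀ z, DifferentiableAt ℝ (fun y => p y z) x) (v : Fin n → ℝ) :
    ∑ i, ∑ j, v i * fisherMatrix p x i j * v j =
      ∑ z, fderiv ℝ (fun y => p y z) x (WithLp.toLp 2 v) ^ 2 / p x z := by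
  have score (z : Z) : ∑ i, v i * gradient (fun y => Real.log (p y z)) x i =
      (p x z)⁻¹ * fderiv ℝ (fun y => p y z) x (WithLp.toLp 2 v) := by
    rw [sum_mul_gradient_eq_fderiv, ((hdiff z).hasFDerivAt.log (hp z)).fderiv]
    rfl
  calc ∑ i, ∑ j, v i * fisherMatrix p x i j * v j
        = ∑ z, p x z * (∑ i, v i * gradient (fun y => Real.log (p y z)) x i) ^ 2 := by
        simp only [fisherMatrix, sq, mul_sum, sum_mul]
        rw [sum_comm_cycle]
        refine sum_congr rfl fun z _ => ?_
        rw [sum_comm]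
        exact sum_congr rfl fun j _ => sum_congr rfl fun i _ => by ring
    _ = _ := sum_congr rfl fun z _ => by
        rw [score]
        field_simp [hp z]

theorem fisher_data_processing_inequality_general
    {Z Y : Type*} [Fintype Z] [Fintype Y] [DecidableEq Y] {n : ℕ}
    (p : EuclideanSpace ℝ (Fin n) → Z → ℝ)
    (hpos : ∀ x z, 0 < p x z)
    (hdiff : ∀ z, Differentiable ℝ (fun x => p x z))
    (g : Z → Y)
    (q : EuclideanSpace ℝ (Fin n) → Y → ℝ)
    (hq : ∀ x y, q x y = ∑ z ∈ Finset.univ.filter (fun z => g z = y), p x z)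
    (hqpos : ∀ x y, 0 < q x y) :
    ∀ x : EuclideanSpace ℝ (Fin n),
      (∀ v : Fin n → ℝ,
        (∑ i, ∑ j, v i * fisherMatrix q x i j * v j) ≤
          (∑ i, ∑ j, v i * fisherMatrix p x i j * v j)) ∧
      (fisherMatrix q x).trace ≤ (fisherMatrix p x).trace := by
  intro x
  have hq_fun (y : Y) : (fun x => q x y) = fun x => ∑ z ∈ univ.filter (g · = y), p x z :=
    funext (hq · y)
  have hq_fderiv (y : Y) : fderiv ℝ (fun x => q x y) x =
      ∑ z ∈ univ.filter (g · = y), fderiv ℝ (fun x => p x z) x := by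
    rw [hq_fun, fderiv_fun_sum fun z _ => (hdiff z).differentiableAt]
  have hq_diff (y : Y) : DifferentiableAt ℝ (fun x => q x y) x := by
    rw [hq_fun]
    exact DifferentiableAt.fun_sum fun z _ => (hdiff z).differentiableAt
  have quadratic_le (v : Fin n → ℝ) :
      ∑ i, ∑ j, v i * fisherMatrix q x i j * v j ≤
        ∑ i, ∑ j, v i * fisherMatrix p x i j * v j := by
    rw [sum_mul_fisherMatrix_mul_eq_sum_fderiv_sq_div q x (fun y => (hqpos x y).ne') hq_diff,
      sum_mul_fisherMatrix_mul_eq_sum_fderiv_sq_div p x (fun z => (hpos x z).ne')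
        fun z => (hdiff z).differentiableAt]
    simp only [hq_fderiv, _root_.sum_apply, hq x]
    exact sum_sq_sum_fiberwise_div_le g _ (hpos x)
  exact ⟨quadratic_le, Matrix.trace_le_trace_of_forall_quadratic_le quadratic_le⟩

/-- **Data-processing inequality for Fisher information.**
If `q : ℝⁿ → Y → ℝ` is obtained from `p : ℝⁿ → Z → ℝ` by pushing forward along
a deterministic map `g : Z → Y`, i.e. `q x y = ∑_{z : g z = y} p x z`, then for
every `x` and every direction `v`, `vᵀ S_q(x) v ≤ vᵀ S_p(x) v`; in particular
`tr S_q(x) ≤ tr S_p(x)`. -/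
theorem fisher_data_processing_inequality
    {Z Y : Type*} [Fintype Z] [Fintype Y] [DecidableEq Y] {n : ℕ}
    (p : EuclideanSpace ℝ (Fin n) → Z → ℝ)
    (hpos : ∀ x z, 0 < p x z)
    (hsum : ∀ x, ∑ z, p x z = 1)
    (hdiff : ∀ z, Differentiable ℝ (fun x => p x z))
    (g : Z → Y)
    (q : EuclideanSpace ℝ (Fin n) → Y → ℝ)
    (hq : ∀ x y, q x y = ∑ z ∈ Finset.univ.filter (fun z => g z = y), p x z)
    (hqpos : ∀ x y, 0 < q x y) :
    ∀ x : EuclideanSpace ℝ (Fin n),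
      (∀ v : Fin n → ℝ,
        (∑ i, ∑ j, v i * fisherMatrix q x i j * v j) ≤
          (∑ i, ∑ j, v i * fisherMatrix p x i j * v j)) ∧
      (fisherMatrix q x).trace ≤ (fisherMatrix p x).trace :=
  fisher_data_processing_inequality_general p hpos hdiff g q hq hqpos
end

section
/- Let Z be a finite type, n a natural number, and p : ℝⁿ → Z → ℝ a family of probability mass functions such that for every x ∈ ℝⁿ and z ∈ Z one has p z x > 0 and ∑_{z ∈ Z} p z x = 1, and such that x ↦ p z x is twice continuously differentiable for every z. Define S(x) = ∑_{z ∈ Z} p z x · (∇_x log p z x)(∇_x log p z x)ᵀ and let λ₁(x) denote its largest eigenvalue. Then for every fixed x, (1/ε²) · sup_{‖δ‖₂ = ε} KL(p(·|x+δ) ‖ p(·|x)) converges to λ₁(x)/2 as ε → 0⁺, where KL(q ‖ r) = ∑_{z} q z · log(q z / r z). -/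
/-!
Write `g δ = KL(p(x + δ) ‖ p(x))`. Since the `p z` sum to one, their gradients sum to zero, so
`g` vanishes to first order at `δ = 0`, and its Hessian there loses the second derivatives of
`p` and reduces to the Fisher form `δ ↦ ∑ z, p x z ⟪∇ log p z, δ⟫² = δᵀ S(x) δ`. Taylor's formula
gives `g δ = ½ δᵀ S(x) δ + o(‖δ‖²)`, uniformly in the direction of `δ`. On the sphere of
radius `ε` the quadratic form is at most `λ₁ ε²`, because `λ₁` dominates every eigenvalue of the
symmetric matrix `S(x)`, and it equals `λ₁ ε²` at `ε v₁`.
-/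

open scoped BigOperators

open Filter Topology Asymptotics

theorem taylor_isLittleO_two_of_hasFDerivAt {E F : Type*} [NormedAddCommGroup E] [NormedSpace ℝ E]
    [NormedAddCommGroup F] [NormedSpace ℝ F] {g : E → F} {g' : E → E →L[ℝ] F}
    {B : E →L[ℝ] E →L[ℝ] F} {x : E} (hg : ∀ᶠ y in 𝓝 x, HasFDerivAt g (g' y) y)
    (hg' : HasFDerivAt g' B x) :
    (fun δ => g (x + δ) - g x - g' x δ - (2 : ℝ)⁻¹ • B δ δ) =o[𝓝 0] fun δ => ‖δ‖ ^ 2 := by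
  have hsymm := second_derivative_symmetric_of_eventually hg hg'
  refine IsLittleO.of_bound fun c hc => ?_
  have hshift : Tendsto (x + ·) (𝓝 (0 : E)) (𝓝 x) := by
    simpa using (continuous_const_add x).tendsto (0 : E)
  have hnear : ∀ᶠ δ in 𝓝 (0 : E), HasFDerivAt g (g' (x + δ)) (x + δ) ∧
      ‖g' (x + δ) - g' x - B δ‖ ≤ c * ‖δ‖ := by
    refine (hshift.eventually hg).and ?_
    simpa using (hg'.isLittleO.comp_tendsto hshift).bound hc
  obtain ⟨r, hr, hball⟩ := Metric.eventually_nhds_iff_ball.1 hnear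
  filter_upwards [Metric.ball_mem_nhds (0 : E) hr] with δ hδ
  have hsub : Metric.closedBall (0 : E) ‖δ‖ ⊆ Metric.ball 0 r :=
    Metric.closedBall_subset_ball (by simpa using hδ)
  have hderiv : ∀ w ∈ Metric.closedBall (0 : E) ‖δ‖,
      HasFDerivWithinAt (fun w => g (x + w) - g x - g' x w - (2 : ℝ)⁻¹ • B w w)
        (g' (x + w) - g' x - B w) (Metric.closedBall 0 ‖δ‖) w := by
    intro w hw
    have hgw := (hball w (hsub hw)).1.comp w ((hasFDerivAt_id w).const_add x)
    have hB := B.hasFDerivAt.clm_apply (hasFDerivAt_id w)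
    refine ((((hgw.sub_const _).sub (g' x).hasFDerivAt).sub (hB.const_smul _)).congr_fderiv
      ?_).hasFDerivWithinAt
    ext v
    simp only [ContinuousLinearMap.comp_id, id_eq, smul_add, sub_apply, add_apply, smul_apply,
      ContinuousLinearMap.flip_apply, hsymm v w, ← add_smul, sub_right_inj]
    norm_num
  have hbound : ∀ w ∈ Metric.closedBall (0 : E) ‖δ‖, ‖g' (x + w) - g' x - B w‖ ≤ c * ‖δ‖ :=
    fun w hw => (hball w (hsub hw)).2.trans (by gcongr; simpa using hw)
  have := (convex_closedBall (0 : E) ‖δ‖).norm_image_sub_le_of_norm_hasFDerivWithin_le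
    hderiv hbound (Metric.mem_closedBall_self (norm_nonneg δ)) (mem_closedBall_zero_iff.2 le_rfl)
  simpa [sq, mul_assoc] using this

theorem tendsto_sSup_sphere_div_sq {E : Type*} [NormedAddCommGroup E] [NormedSpace ℝ E]
    {f : E → ℝ} {B : E →L[ℝ] E →L[ℝ] ℝ} {lam : ℝ} {v : E}
    (hf : (fun δ => f δ - B δ δ / 2) =o[𝓝 0] fun δ => ‖δ‖ ^ 2)
    (hB : ∀ δ, B δ δ ≤ lam * ‖δ‖ ^ 2) (hv : ‖v‖ = 1) (hBv : B v v = lam) :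
    Tendsto (fun ε : ℝ => 1 / ε ^ 2 * sSup {y | ∃ δ : E, ‖δ‖ = ε ∧ y = f δ})
      (𝓝[>] 0) (𝓝 (lam / 2)) := by
  rw [Metric.tendsto_nhdsWithin_nhds]
  intro η hη
  obtain ⟨r, hr, hclose⟩ := Metric.eventually_nhds_iff_ball.1 (hf.bound (half_pos hη))
  refine ⟨r, hr, fun ε (hε : 0 < ε) hεr => ?_⟩
  have hclose' : ∀ δ : E, ‖δ‖ = ε → |f δ - B δ δ / 2| ≤ η / 2 * ε ^ 2 := fun δ hδ => by
    simpa [hδ, abs_of_pos hε] using hclose δ (by simpa [hδ, abs_of_pos hε] using hεr)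
  have hupper : ∀ y ∈ {y | ∃ δ : E, ‖δ‖ = ε ∧ y = f δ}, y ≤ (lam / 2 + η / 2) * ε ^ 2 := by
    rintro _ ⟨δ, hδ, rfl⟩
    have := hB δ
    rw [hδ] at this
    linarith [(abs_le.1 (hclose' δ hδ)).2]
  have hεv : ‖ε • v‖ = ε := by simp [norm_smul, hv, hε.le]
  have hmem : f (ε • v) ∈ {y | ∃ δ : E, ‖δ‖ = ε ∧ y = f δ} := ⟨ε • v, hεv, rfl⟩
  have hlower : (lam / 2 - η / 2) * ε ^ 2 ≤ f (ε • v) := by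
    have := (abs_le.1 (hclose' _ hεv)).1
    simp only [map_smul, smul_apply, smul_eq_mul, hBv] at this
    nlinarith
  have hsup := csSup_le ⟨_, hmem⟩ hupper
  have hinf := le_csSup ⟨_, hupper⟩ hmem
  rw [Real.dist_eq, abs_lt]
  have hε2 : 0 < ε ^ 2 := by positivity
  constructor
  · rw [lt_sub_iff_add_lt, div_mul_eq_mul_div, one_mul, lt_div_iff₀ hε2]; nlinarith
  · rw [sub_lt_iff_lt_add, div_mul_eq_mul_div, one_mul, div_lt_iff₀ hε2]; nlinarith

noncomputable def klDivergence {Z : Type*} [Fintype Z] (q r : Z → ℝ) : ℝ :=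
  ∑ z, q z * Real.log (q z / r z)

noncomputable def fisherForm {E Z : Type*} [NormedAddCommGroup E] [NormedSpace ℝ E] [Fintype Z]
    (p : E → Z → ℝ) (x : E) : E →L[ℝ] E →L[ℝ] ℝ :=
  ∑ z, p x z • (fderiv ℝ (fun y => Real.log (p y z)) x).smulRight
    (fderiv ℝ (fun y => Real.log (p y z)) x)

section Calculus

variable {E Z : Type*} [NormedAddCommGroup E] [NormedSpace ℝ E] {p : E → Z → ℝ}

theorem hasFDerivAt_log_div (hpos : ∀ y z, 0 < p y z)
    (hdiff : ∀ z, Differentiable ℝ (fun y => p y z)) (x y : E) (z : Z) :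
    HasFDerivAt (fun y => Real.log (p y z / p x z))
      ((p y z)⁻¹ • fderiv ℝ (fun y => p y z) y) y := by
  have h := ((hdiff z y).hasFDerivAt.log (hpos y z).ne').sub_const (Real.log (p x z))
  refine h.congr_of_eventuallyEq (Eventually.of_forall fun w => ?_)
  exact Real.log_div (hpos w z).ne' (hpos x z).ne'

variable [Fintype Z]

theorem fisherForm_apply (x u v : E) :
    fisherForm p x u v = ∑ z, p x z * (fderiv ℝ (fun y => Real.log (p y z)) x u *
      fderiv ℝ (fun y => Real.log (p y z)) x v) := by
  simp [fisherForm]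

theorem sum_fderiv_eq_zero_of_sum_eq_one (hsum : ∀ y, ∑ z, p y z = 1)
    (hdiff : ∀ z, Differentiable ℝ (fun y => p y z)) (y : E) :
    ∑ z, fderiv ℝ (fun y => p y z) y = 0 := by
  rw [← fderiv_fun_sum fun z _ => hdiff z y, funext hsum]
  simp

theorem hasFDerivAt_klDivergence (hpos : ∀ y z, 0 < p y z) (hsum : ∀ y, ∑ z, p y z = 1)
    (hdiff : ∀ z, Differentiable ℝ (fun y => p y z)) (x y : E) :
    HasFDerivAt (fun y => klDivergence (p y) (p x))
      (∑ z, Real.log (p y z / p x z) • fderiv ℝ (fun y => p y z) y) y := by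
  have hterm : ∀ z, HasFDerivAt (fun y => p y z * Real.log (p y z / p x z))
      (fderiv ℝ (fun y => p y z) y + Real.log (p y z / p x z) • fderiv ℝ (fun y => p y z) y) y :=
    fun z => ((hdiff z y).hasFDerivAt.mul (hasFDerivAt_log_div hpos hdiff x y z)).congr_fderiv
      (by rw [smul_smul, mul_inv_cancel₀ (hpos y z).ne', one_smul])
  simpa [klDivergence, Finset.sum_add_distrib, sum_fderiv_eq_zero_of_sum_eq_one hsum hdiff] using
    HasFDerivAt.fun_sum (u := Finset.univ) fun z _ => hterm z

theorem hasFDerivAt_sum_log_div_smul_fderiv (hpos : ∀ y z, 0 < p y z)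
    (hdiff : ∀ z, Differentiable ℝ (fun y => p y z)) (x : E)
    (hdiff2 : ∀ z, DifferentiableAt ℝ (fderiv ℝ (fun y => p y z)) x) :
    HasFDerivAt (fun y => ∑ z, Real.log (p y z / p x z) • fderiv ℝ (fun y => p y z) y)
      (fisherForm p x) x := by
  refine (HasFDerivAt.fun_sum (u := Finset.univ) fun z _ =>
    (hasFDerivAt_log_div hpos hdiff x x z).smul (hdiff2 z).hasFDerivAt).congr_fderiv ?_
  have hscore : ∀ z, fderiv ℝ (fun y => Real.log (p y z)) x =
      (p x z)⁻¹ • fderiv ℝ (fun y => p y z) x :=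
    fun z => ((hdiff z x).hasFDerivAt.log (hpos x z).ne').fderiv
  ext u v
  simp only [fisherForm, hscore, Real.log_div_self, zero_smul, zero_add, sum_apply,
    ContinuousLinearMap.smulRight_apply, smul_apply, smul_eq_mul]
  refine Finset.sum_congr rfl fun z _ => ?_
  field_simp [(hpos x z).ne']

end Calculus

open Matrix

theorem EuclideanSpace.norm_sq_eq_dotProduct {ι : Type*} [Fintype ι]
    (u : EuclideanSpace ℝ ι) : ‖u‖ ^ 2 = u.ofLp ⬝ᵥ u.ofLp := by
  rw [← real_inner_self_eq_norm_sq, EuclideanSpace.inner_eq_star_dotProduct, star_trivial]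

theorem Matrix.IsHermitian.dotProduct_mulVec_le_of_eigenvalues_le {ι : Type*} [Fintype ι]
    {S : Matrix ι ι ℝ} (hS : S.IsHermitian) {lam : ℝ}
    (hmax : ∀ (μ : ℝ) (v : ι → ℝ), v ≠ 0 → S *ᵥ v = μ • v → μ ≤ lam) (u : ι → ℝ) :
    u ⬝ᵥ S *ᵥ u ≤ lam * (u ⬝ᵥ u) := by
  classical
  have hA : (lam • 1 - S).IsHermitian := (isHermitian_one.smul (IsSelfAdjoint.all lam)).sub hS
  have hpsd : (lam • 1 - S).PosSemidef := by
    refine hA.posSemidef_iff_eigenvalues_nonneg.2 fun i => ?_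
    have heig := hA.mulVec_eigenvectorBasis i
    have hne : ⇑(hA.eigenvectorBasis i) ≠ 0 := by
      simpa using hA.eigenvectorBasis.orthonormal.ne_zero i
    have := hmax (lam - hA.eigenvalues i) _ hne (by
      rw [sub_mulVec, smul_mulVec, one_mulVec] at heig
      rw [sub_smul, ← heig, sub_sub_cancel])
    simpa using this
  have := hpsd.dotProduct_mulVec_nonneg u
  simp only [star_trivial, sub_mulVec, smul_mulVec, one_mulVec, dotProduct_sub, dotProduct_smul,
    smul_eq_mul, sub_nonneg] at this
  linarith

section FisherMatrix

variable {Z : Type*} [Fintype Z] {n : ℕ}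

theorem fisherMatrix_eq_sum_vecMulVec (p : EuclideanSpace ℝ (Fin n) → Z → ℝ)
    (x : EuclideanSpace ℝ (Fin n)) :
    fisherMatrix p x = ∑ z, p x z • vecMulVec (gradient (fun y => Real.log (p y z)) x).ofLp
      (gradient (fun y => Real.log (p y z)) x).ofLp := by
  ext i j
  simp [fisherMatrix, vecMulVec, Matrix.sum_apply, mul_assoc]

theorem isHermitian_fisherMatrix (p : EuclideanSpace ℝ (Fin n) → Z → ℝ)
    (x : EuclideanSpace ℝ (Fin n)) : (fisherMatrix p x).IsHermitian :=
  IsHermitian.ext fun i j => Finset.sum_congr rfl fun z _ => by ring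

theorem dotProduct_fisherMatrix_mulVec (p : EuclideanSpace ℝ (Fin n) → Z → ℝ)
    (x u : EuclideanSpace ℝ (Fin n)) :
    u.ofLp ⬝ᵥ fisherMatrix p x *ᵥ u.ofLp = fisherForm p x u u := by
  simp only [fisherMatrix_eq_sum_vecMulVec, fisherForm_apply, ← inner_gradient_left,
    EuclideanSpace.inner_eq_star_dotProduct, Matrix.sum_mulVec, smul_mulVec, vecMulVec_mulVec,
    dotProduct_sum]
  simp [dotProduct_comm]

end FisherMatrix

/-- **Asymptotics of the worst-case KL divergence under small input perturbations.**
For a finite family of everywhere-positive, twice continuously differentiable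
probability mass functions `p`, the worst-case KL divergence over perturbations
`δ` with `‖δ‖₂ = ε`, rescaled by `1/ε²`, converges to `λ₁(x)/2` as `ε → 0⁺`,
where `λ₁(x)` is the largest eigenvalue of the Fisher matrix `S(x)`. -/
theorem sup_kl_over_sphere_asymptotics
    {Z : Type*} [Fintype Z] {n : ℕ}
    (p : EuclideanSpace ℝ (Fin n) → Z → ℝ)
    (hpos : ∀ x z, 0 < p x z)
    (hsum : ∀ x, ∑ z, p x z = 1)
    (hsmooth : ∀ z, ContDiff ℝ 2 (fun x => p x z))
    (x : EuclideanSpace ℝ (Fin n))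
    (lam1 : ℝ) (v1 : Fin n → ℝ)
    (hv_unit : ∑ i, v1 i ^ 2 = 1)
    (heig : (fisherMatrix p x).mulVec v1 = lam1 • v1)
    (hmax : ∀ (μ : ℝ) (v : Fin n → ℝ), v ≠ 0 →
      (fisherMatrix p x).mulVec v = μ • v → μ ≤ lam1) :
    Filter.Tendsto
      (fun ε : ℝ => (1 / ε ^ 2) *
        sSup {y : ℝ | ∃ δ : EuclideanSpace ℝ (Fin n), ‖δ‖ = ε ∧
          y = ∑ z, p (x + δ) z * Real.log (p (x + δ) z / p x z)})
      (nhdsWithin 0 (Set.Ioi 0)) (nhds (lam1 / 2)) := by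
  have hdiff : ∀ z, Differentiable ℝ (fun y => p y z) :=
    fun z => (hsmooth z).differentiable two_ne_zero
  have hdiff2 : ∀ z, DifferentiableAt ℝ (fderiv ℝ (fun y => p y z)) x :=
    fun z => ((hsmooth z).fderiv_right le_rfl).differentiable one_ne_zero x
  have htaylor := taylor_isLittleO_two_of_hasFDerivAt
    (Eventually.of_forall (hasFDerivAt_klDivergence hpos hsum hdiff x))
    (hasFDerivAt_sum_log_div_smul_fderiv hpos hdiff x hdiff2)
  have hv1 : ‖WithLp.toLp 2 v1‖ = 1 := by
    rw [← sq_eq_sq₀ (norm_nonneg _) zero_le_one, one_pow, EuclideanSpace.norm_sq_eq_dotProduct]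
    simpa [dotProduct, sq] using hv_unit
  refine tendsto_sSup_sphere_div_sq (f := fun δ => klDivergence (p (x + δ)) (p x))
    (B := fisherForm p x) ?_ (fun δ => ?_) hv1 ?_
  · simpa [klDivergence, Real.log_div_self, inv_mul_eq_div] using htaylor
  · rw [← dotProduct_fisherMatrix_mulVec, EuclideanSpace.norm_sq_eq_dotProduct]
    exact (isHermitian_fisherMatrix p x).dotProduct_mulVec_le_of_eigenvalues_le hmax _
  · rw [← dotProduct_fisherMatrix_mulVec, WithLp.ofLp_toLp, heig, dotProduct_smul, smul_eq_mul]
    simpa [dotProduct, sq] using congrArg (lam1 * ·) hv_unit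
end
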